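/- arXiv:math/0611623 — 3 statements merged into one kernel-verified Lean document; each statement's English description precedes it below -/
import Mathlib

section
/- Let k be a field, V a k-vector space, and c : V × V → k a function satisfying c(v,0) = c(0,v) = 0 for all v ∈ V. Then c satisfies the six-term identity c(v₁,v₃) + c(v₂,v₄) − c(v₁+v₂, v₃+v₄) = c(v₁,v₂) + c(v₃,v₄) − c(v₁+v₃, v₂+v₄) for all v₁, v₂, v₃, v₄ ∈ V if and only if c is symmetric, i.e. c(a,b) = c(b,a) for all a, b ∈ V, and c is a 2-cocycle of the additive group of V with coefficients in k, i.e. c(a,b) + c(a+b,d) = c(b,d) + c(a,b+d) for all a, b, d ∈ V. -/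
/-- For a function `c : V × V → k` vanishing on `(v,0)` and `(0,v)`,
the six-term identity holds for all quadruples iff `c` is a symmetric 2-cocycle of the
additive group of `V` with coefficients in `k`. -/
theorem stmt_5 (k : Type*) [Field k] (V : Type*) [AddCommGroup V] [Module k V]
    (c : V → V → k) (hc : ∀ v : V, c v 0 = 0 ∧ c 0 v = 0) :
    (∀ v₁ v₂ v₃ v₄ : V,
        c v₁ v₃ + c v₂ v₄ - c (v₁ + v₂) (v₃ + v₄)
          = c v₁ v₂ + c v₃ v₄ - c (v₁ + v₃) (v₂ + v₄))
      ↔ ((∀ a b : V, c a b = c b a) ∧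
          (∀ a b d : V, c a b + c (a + b) d = c b d + c a (b + d))) := by
  constructor
  · intro h
    constructor
    · intro a b
      have := h 0 a b 0
      simp [(hc a).1, (hc a).2, (hc b).1, (hc b).2, (hc 0).1] at this
      exact this
    · intro a b d
      have := h a b 0 d
      simp [(hc a).1, (hc d).2, zero_add] at this
      linear_combination -this
  · rintro ⟨h1, h2⟩ v₁ v₂ v₃ v₄
    have e1 := h2 v₁ v₂ (v₃ + v₄)
    have e2 := h2 v₁ v₃ (v₂ + v₄)
    have e3 := h2 v₂ v₃ v₄
    have e4 := h2 v₃ v₂ v₄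
    have s := h1 v₂ v₃
    rw [show v₃ + v₂ = v₂ + v₃ from add_comm _ _] at e4
    rw [show v₃ + (v₂ + v₄) = v₂ + (v₃ + v₄) by abel] at e2
    linear_combination e2 - e1 + e3 - e4 - s
end

section
/- Let k be a field and Γ₊ the category of finite pointed sets with basepoint-preserving maps as morphisms. Let T* : Γ₊ → Vect_k be the reduced k-linear span functor, T*(X) = k[X]/k·x₀. Then the functor from Vect_k to the functor category Fun(Γ₊, Vect_k) sending a k-vector space W to the functor X ↦ W ⊗_k T*(X) is fully faithful; that is, for any k-vector spaces W, W′, the natural map Hom_k(W, W′) → Hom_{Fun(Γ₊, Vect_k)}(W ⊗ T*, W′ ⊗ T*) is bijective. -/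
open CategoryTheory

open scoped TensorProduct

/-- The category `Γ₊` of finite pointed sets, with basepoint-preserving maps as morphisms. -/
abbrev GammaPlus : Type 1 := ObjectProperty.FullSubcategory (fun X : Pointed => Finite X.X)

/-- The reduced `k`-linear span functor `T* : Γ₊ → Vect_k`, `X ↦ k[X]/k·x₀`. -/
noncomputable def Tstar (k : Type) [Field k] : GammaPlus ⥤ ModuleCat.{0} k where
  obj X := ModuleCat.of k
    ((X.obj.X →₀ k) ⧸ Submodule.span k {Finsupp.single X.obj.point (1 : k)})
  map {X Y} f := ModuleCat.ofHom <| Submodule.mapQ _ _ (Finsupp.lmapDomain k k f.hom.toFun)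
    (by
      rw [Submodule.span_le]
      rintro x hx
      simp only [Set.mem_singleton_iff] at hx
      subst hx
      simp only [SetLike.mem_coe, Submodule.mem_comap, Finsupp.lmapDomain_apply,
        Finsupp.mapDomain_single, f.hom.map_point]
      exact Submodule.mem_span_singleton_self _)
  map_id X := by
    apply ModuleCat.hom_ext
    apply Submodule.linearMap_qext
    apply Finsupp.lhom_ext
    intro a b
    show Submodule.Quotient.mk (Finsupp.mapDomain _root_.id (Finsupp.single a b)) = _
    rw [Finsupp.mapDomain_single]
    rfl
  map_comp {X Y Z} f g := by
    apply ModuleCat.hom_ext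
    apply Submodule.linearMap_qext
    apply Finsupp.lhom_ext
    intro a b
    show Submodule.Quotient.mk (Finsupp.mapDomain (f ≫ g).hom.toFun (Finsupp.single a b)) = _
    rw [Finsupp.mapDomain_single]
    show _ = Submodule.Quotient.mk
      (Finsupp.mapDomain g.hom.toFun (Finsupp.mapDomain f.hom.toFun (Finsupp.single a b)))
    rw [Finsupp.mapDomain_single, Finsupp.mapDomain_single]
    rfl

/-- The functor `X ↦ W ⊗ T*(X)`, for a fixed `k`-vector space `W`. -/
noncomputable def tensorTstar (k : Type) [Field k] (W : Type) [AddCommGroup W] [Module k W] :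
    GammaPlus ⥤ ModuleCat.{0} k where
  obj X := ModuleCat.of k (W ⊗[k] ((Tstar k).obj X))
  map {X Y} f := ModuleCat.ofHom (TensorProduct.map LinearMap.id ((Tstar k).map f).hom)
  map_id X := by
    try dsimp only
    rw [(Tstar k).map_id]
    apply ModuleCat.hom_ext
    apply TensorProduct.ext'
    intro w t
    rfl
  map_comp {X Y Z} f g := by
    try dsimp only
    rw [(Tstar k).map_comp]
    apply ModuleCat.hom_ext
    apply TensorProduct.ext'
    intro w t
    rfl

/-- The natural transformation `W ⊗ T* ⟶ W' ⊗ T*` induced by a linear map `f : W → W'`. -/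
noncomputable def tensorTstarMap (k : Type) [Field k] (W W' : Type) [AddCommGroup W]
    [Module k W] [AddCommGroup W'] [Module k W'] (f : W →ₗ[k] W') :
    tensorTstar k W ⟶ tensorTstar k W' where
  app X := ModuleCat.ofHom (TensorProduct.map f LinearMap.id)
  naturality {X Y} g := by
    apply ModuleCat.hom_ext
    apply TensorProduct.ext'
    intro w t
    rfl

/-!
Let `two = {∗, 1}`. Then `T*(two)` is the line spanned by the class `e` of `1`, and for `a ∈ X` the
pointed map `two → X` hitting `a` sends `e` to the class of `a`; these classes span `T*(X)`. So, by
naturality, a transformation out of `W ⊗ T*` is determined by the values `η_two (w ⊗ e)`, which lie in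
`W' ⊗ T*(two) ≅ W'`. Reading them through this isomorphism recovers `f` from `W ⊗ T* ⟶ W' ⊗ T*` and
produces the preimage of an arbitrary `η`.
-/

namespace GammaPlus

abbrev two : GammaPlus := ⟨{ X := Bool, point := false }, inferInstanceAs (Finite Bool)⟩

def pointMap (X : GammaPlus) (a : X.obj.X) : two ⟶ X :=
  ObjectProperty.homMk ⟨fun c => bif c then a else X.obj.point, rfl⟩

end GammaPlus

open GammaPlus

namespace Tstar

variable (k : Type) [Field k]

noncomputable def mk (X : GammaPlus) : (X.obj.X →₀ k) →ₗ[k] (Tstar k).obj X := Submodule.mkQ _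

variable {k}

lemma mk_surjective (X : GammaPlus) : Function.Surjective (mk k X) := Submodule.mkQ_surjective _

lemma mk_single_point (X : GammaPlus) (b : k) : mk k X (Finsupp.single X.obj.point b) = 0 := by
  refine (Submodule.Quotient.mk_eq_zero _).2 (Submodule.mem_span_singleton.2 ⟨b, ?_⟩)
  rw [Finsupp.smul_single_one]

lemma map_mk {X Y : GammaPlus} (f : X ⟶ Y) (g : X.obj.X →₀ k) :
    ((Tstar k).map f).hom (mk k X g) = mk k Y (Finsupp.mapDomain f.hom.toFun g) := rfl

variable (k)

noncomputable def generator : (Tstar k).obj two := mk k two (Finsupp.single true 1)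

noncomputable def coord : (Tstar k).obj two →ₗ[k] k :=
  Submodule.liftQ _ (Finsupp.lapply true) <| by
    rw [Submodule.span_le, Set.singleton_subset_iff]
    simp

lemma coord_mk (g : Bool →₀ k) : coord k (mk k two g) = g true := rfl

@[simp] lemma coord_generator : coord k (generator k) = 1 := by
  rw [generator, coord_mk, Finsupp.single_eq_same]

lemma coord_smul_generator (t : (Tstar k).obj two) : coord k t • generator k = t := by
  obtain ⟨g, rfl⟩ := mk_surjective two t
  have hg : g = Finsupp.single true (g true) + Finsupp.single false (g false) := by
    ext (_ | _) <;> simp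
  conv_rhs => rw [hg, map_add, mk_single_point two, add_zero]
  rw [coord_mk, generator, ← map_smul, Finsupp.smul_single_one]

lemma map_pointMap_generator (X : GammaPlus) (a : X.obj.X) :
    ((Tstar k).map (pointMap X a)).hom (generator k) = mk k X (Finsupp.single a 1) := by
  rw [generator, map_mk, Finsupp.mapDomain_single]
  rfl

variable {k}

lemma tensor_ext {W V : Type} [AddCommGroup W] [Module k W]
    [AddCommGroup V] [Module k V] {X : GammaPlus} {L L' : W ⊗[k] (Tstar k).obj X →ₗ[k] V}
    (h : ∀ (w : W) (a : X.obj.X), L (w ⊗ₜ mk k X (Finsupp.single a 1)) =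
      L' (w ⊗ₜ mk k X (Finsupp.single a 1))) : L = L' := by
  refine TensorProduct.ext' fun w t => ?_
  obtain ⟨g, rfl⟩ := mk_surjective X t
  induction g using Finsupp.induction_linear with
  | zero => simp only [map_zero, TensorProduct.tmul_zero]
  | add g₁ g₂ ih₁ ih₂ => simp only [map_add, TensorProduct.tmul_add, ih₁, ih₂]
  | single a b =>
    rw [← Finsupp.smul_single_one, map_smul, TensorProduct.tmul_smul, map_smul, map_smul, h]

end Tstar

namespace tensorTstar

variable {k : Type} [Field k] {W : Type} [AddCommGroup W] [Module k W]

lemma natTrans_app_tmul_single {F : GammaPlus ⥤ ModuleCat.{0} k} (η : tensorTstar k W ⟶ F)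
    {X : GammaPlus} (w : W) (a : X.obj.X) :
    (η.app X).hom (w ⊗ₜ Tstar.mk k X (Finsupp.single a 1)) =
      (F.map (pointMap X a)).hom ((η.app two).hom (w ⊗ₜ Tstar.generator k)) := by
  rw [← Tstar.map_pointMap_generator]
  exact NatTrans.naturality_apply η (pointMap X a) (w ⊗ₜ Tstar.generator k)

theorem natTrans_ext {F : GammaPlus ⥤ ModuleCat.{0} k} {η η' : tensorTstar k W ⟶ F}
    (h : ∀ w : W, (η.app two).hom (w ⊗ₜ Tstar.generator k) =
      (η'.app two).hom (w ⊗ₜ Tstar.generator k)) : η = η' := by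
  ext X : 2
  apply ModuleCat.hom_ext
  refine Tstar.tensor_ext fun w a => ?_
  calc _ = (F.map (pointMap X a)).hom ((η.app two).hom (w ⊗ₜ Tstar.generator k)) :=
        natTrans_app_tmul_single η w a
    _ = (F.map (pointMap X a)).hom ((η'.app two).hom (w ⊗ₜ Tstar.generator k)) := by rw [h]
    _ = _ := (natTrans_app_tmul_single η' w a).symm

variable (k W) in
noncomputable def coord : W ⊗[k] (Tstar k).obj two →ₗ[k] W :=
  TensorProduct.rid k W ∘ₗ TensorProduct.map LinearMap.id (Tstar.coord k)

lemma coord_tmul_generator (w : W) : coord k W (w ⊗ₜ Tstar.generator k) = w := by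
  simp [coord]

lemma tmul_generator_coord (z : W ⊗[k] (Tstar k).obj two) :
    coord k W z ⊗ₜ Tstar.generator k = z := by
  induction z using TensorProduct.induction_on with
  | zero => simp
  | tmul w t => simp [coord, TensorProduct.smul_tmul, Tstar.coord_smul_generator]
  | add z₁ z₂ ih₁ ih₂ => rw [map_add, TensorProduct.add_tmul, ih₁, ih₂]

end tensorTstar

lemma tensorTstarMap_app_tmul {k : Type} [Field k] {W W' : Type} [AddCommGroup W] [Module k W]
    [AddCommGroup W'] [Module k W'] (f : W →ₗ[k] W') (X : GammaPlus) (w : W)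
    (t : (Tstar k).obj X) : ((tensorTstarMap k W W' f).app X).hom (w ⊗ₜ t) = f w ⊗ₜ t := rfl

/-- The functor `Vect_k → Fun(Γ₊, Vect_k)`, `W ↦ W ⊗ T*`, is fully
faithful: for any `k`-vector spaces `W`, `W'` the natural map
`Hom_k(W, W') → Hom(W ⊗ T*, W' ⊗ T*)` is bijective. -/
theorem stmt_8 (k : Type) [Field k] (W W' : Type) [AddCommGroup W] [Module k W]
    [AddCommGroup W'] [Module k W'] :
    Function.Bijective (fun f : W →ₗ[k] W' => tensorTstarMap k W W' f) := by
  constructor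
  · intro f f' h
    ext w
    simpa only [tensorTstarMap_app_tmul, tensorTstar.coord_tmul_generator] using
      congr(tensorTstar.coord k W' ((($h).app two).hom (w ⊗ₜ Tstar.generator k)))
  · intro η
    refine ⟨tensorTstar.coord k W' ∘ₗ (η.app two).hom ∘ₗ
      (TensorProduct.mk k W ((Tstar k).obj two)).flip (Tstar.generator k), tensorTstar.natTrans_ext fun w => ?_⟩
    rw [tensorTstarMap_app_tmul]
    exact tensorTstar.tmul_generator_coord _
end

section
/- Let k be a field and Γ₋ the category of finite nonempty sets with surjective maps as morphisms. In the functor category A = Fun(Γ₋^op, Vect_k), let s₂ be the functor sending a finite set X to the free k-module on the set of surjections X ↠ {0,1} (with functoriality by precomposition), let s₁ be the constant functor k, let η : s₂ → s₁ send each basis surjection to 1 ∈ k, and let t₁ be the functor with t₁(X) = k when X is a singleton and t₁(X) = 0 otherwise. Set P_i = s₂^{⊗i} (pointwise tensor power, with P₀ = s₁) and d_i = Σ_{j=1}^{i} (−1)^j id^{⊗(j−1)} ⊗ η ⊗ id^{⊗(i−j)} : P_i → P_{i−1}. Then d_{i} ∘ d_{i+1} = 0, each P_i is a projective object of A, the cokernel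 of d₁ : P₁ → P₀ is isomorphic to t₁, and the complex (P_•, d) is exact in positive degrees; i.e., P_• is a projective resolution of t₁ in A. -/
open CategoryTheory CategoryTheory.Limits

noncomputable section

/-- The category `Γ₋` of finite nonempty sets, with surjective maps as morphisms. -/
structure GammaMinus : Type 1 where
  carrier : Type
  [nonempty : Nonempty carrier]
  [finite : Finite carrier]

attribute [instance] GammaMinus.nonempty GammaMinus.finite

instance : Category GammaMinus where
  Hom X Y := {f : X.carrier → Y.carrier // Function.Surjective f}
  id X := ⟨id, Function.surjective_id⟩
  comp f g := ⟨g.1 ∘ f.1, g.2.comp f.2⟩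

/-- Surjections from `X` onto a type `A`. -/
def SurjTo (X : GammaMinus) (A : Type) : Type := {f : X.carrier → A // Function.Surjective f}

variable (k : Type) [Field k]

/-- The functor `P i = s₂^{⊗i} : Γ₋ᵒᵖ → Vect_k`: the `i`-th pointwise tensor power of the
functor `s₂ : X ↦ k[Surj(X, {0,1})]`, realized via its canonical basis as the free module on
`i`-tuples of surjections `X ↠ {0,1}` (for `i = 0` this is the constant functor
`s₁ = k`, free on the empty tuple). -/
def Pfun (i : ℕ) : GammaMinusᵒᵖ ⥤ ModuleCat.{0} k where
  obj X := ModuleCat.of k ((Fin i → SurjTo X.unop Bool) →₀ k)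
  map {X Y} g := ModuleCat.ofHom (Finsupp.lmapDomain k k
    (fun t (j : Fin i) => (⟨(t j).1 ∘ g.unop.1, (t j).2.comp g.unop.2⟩ : SurjTo Y.unop Bool)))
  map_id X := by
    apply ModuleCat.hom_ext
    apply Finsupp.lhom_ext
    intro t b
    show Finsupp.mapDomain _ (Finsupp.single t b) = Finsupp.single t b
    erw [Finsupp.mapDomain_single]
    rfl
  map_comp {X Y Z} f g := by
    apply ModuleCat.hom_ext
    apply Finsupp.lhom_ext
    intro t b
    show Finsupp.mapDomain _ (Finsupp.single t b) = _
    erw [Finsupp.mapDomain_single]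
    show _ = Finsupp.mapDomain _ (Finsupp.mapDomain _ (Finsupp.single t b))
    erw [Finsupp.mapDomain_single, Finsupp.mapDomain_single]
    rfl

/-- The differential `d_{i+1} = Σ_j (-1)^j id^{⊗(j-1)} ⊗ η ⊗ id^{⊗(i+1-j)} : P_{i+1} → P_i`,
where `η : s₂ → s₁` sends each basis surjection to `1 ∈ k`. -/
def dAux (i : ℕ) (X : GammaMinus) :
    ((Fin (i + 1) → SurjTo X Bool) →₀ k) →ₗ[k] ((Fin i → SurjTo X Bool) →₀ k) :=
  Finsupp.lift _ k _
    (fun t => ∑ j : Fin (i + 1), ((-1 : k) ^ ((j : ℕ) + 1)) •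
      Finsupp.single (fun l => t (j.succAbove l)) (1 : k))

/-- The differential, as a natural transformation `P (i+1) ⟶ P i`. -/
def dNat (i : ℕ) : Pfun k (i + 1) ⟶ Pfun k i where
  app X := ModuleCat.ofHom (dAux k i X.unop)
  naturality {X Y} g := by
    apply ModuleCat.hom_ext
    apply Finsupp.lhom_ext
    intro t b
    show dAux k i Y.unop (Finsupp.mapDomain _ (Finsupp.single t b)) =
      Finsupp.mapDomain _ (dAux k i X.unop (Finsupp.single t b))
    erw [Finsupp.mapDomain_single]
    show (Finsupp.lift _ k _ _) (Finsupp.single _ b) =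
      Finsupp.mapDomain _ ((Finsupp.lift _ k _ _) (Finsupp.single t b))
    erw [Finsupp.lift_apply, Finsupp.lift_apply, Finsupp.sum_single_index (by simp),
      Finsupp.sum_single_index (by simp)]
    simp only [Finsupp.mapDomain_smul, Finsupp.mapDomain_finset_sum, Finsupp.mapDomain_single]
    erw [Finsupp.mapDomain_smul, Finsupp.mapDomain_finsetSum]
    congr 1
    refine Finset.sum_congr rfl fun j _ => ?_
    erw [Finsupp.mapDomain_smul, Finsupp.mapDomain_single]

/-- The functor `t₁ : Γ₋ᵒᵖ → Vect_k` with `t₁(X) = k` for `X` a singleton and `t₁(X) = 0`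
otherwise. -/
def t1Sub (X : GammaMinus) : Submodule k k where
  carrier := {c | ¬ Subsingleton X.carrier → c = 0}
  add_mem' := fun {a b} ha hb h => by rw [ha h, hb h, add_zero]
  zero_mem' := fun _ => rfl
  smul_mem' := fun c {x} hx h => by rw [hx h, smul_zero]

open scoped Classical in
/-- The linear map `t₁(A) → t₁(B)` (the identity of `k` if `B` is a singleton, zero
otherwise). -/
def t1Map (A B : GammaMinus) : t1Sub k A →ₗ[k] t1Sub k B where
  toFun c := ⟨if Subsingleton B.carrier then (c : k) else 0, fun h => if_neg h⟩
  map_add' a b := Subtype.ext (by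
    dsimp only
    split_ifs with h
    · rfl
    · simp)
  map_smul' c a := Subtype.ext (by
    dsimp only
    split_ifs with h
    · rfl
    · simp)

open scoped Classical in
/-- The functor `t₁`. -/
def t1 : GammaMinusᵒᵖ ⥤ ModuleCat.{0} k where
  obj X := ModuleCat.of k (t1Sub k X.unop)
  map {X Y} g := ModuleCat.ofHom (t1Map k X.unop Y.unop)
  map_id X := by
    apply ModuleCat.hom_ext
    apply LinearMap.ext
    rintro ⟨c, hc⟩
    apply Subtype.ext
    show (if Subsingleton X.unop.carrier then c else 0) = c
    split_ifs with h
    · rfl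
    · exact (hc h).symm
  map_comp {X Y Z} f g := by
    apply ModuleCat.hom_ext
    apply LinearMap.ext
    rintro ⟨c, hc⟩
    apply Subtype.ext
    show (if Subsingleton Z.unop.carrier then c else 0) =
      (if Subsingleton Z.unop.carrier
        then (if Subsingleton Y.unop.carrier then c else 0) else 0)
    by_cases h : Subsingleton Z.unop.carrier
    · have hY : Subsingleton Y.unop.carrier := by
        have hs := g.unop.2
        exact hs.subsingleton
      rw [if_pos h, if_pos h, if_pos hY]
    · rw [if_neg h, if_neg h]

/-!
At an object `X`, `P_•(X)` is the complex of the free modules on tuples of elements of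
`S = Surj(X, {0,1})` whose differential deletes entries with alternating signs. Prepending a fixed
`s ∈ S` is a contracting homotopy; this gives `d ∘ d = 0` and exactness as soon as `S` is nonempty.
`S` is empty exactly when `X` is a singleton, and then `P_0(X) = k = t₁(X)`, so the cokernel of
`d₁` is `t₁`.

An `i`-tuple of surjections `X ↠ {0,1}` is a map `X → {0,1}^i`, which factors uniquely through
its image `R`, a subset of `{0,1}^i` surjecting onto every coordinate. Hence `P_i` is the finite
direct sum of the linearized representables `k[Hom(-, R)]`, and is projective: a map out of `P_i`
lifts along an epimorphism once a preimage of the image of the tautological tuple at each `R` is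
chosen.
-/

namespace Finsupp

section TupleComplex

variable (R : Type*) [CommRing R] (S : Type*)

def tupleD (i : ℕ) : ((Fin (i + 1) → S) →₀ R) →ₗ[R] ((Fin i → S) →₀ R) :=
  Finsupp.lift _ R _
    (fun t => ∑ j : Fin (i + 1), ((-1 : R) ^ ((j : ℕ) + 1)) •
      Finsupp.single (t ∘ j.succAbove) (1 : R))

def consMap (s : S) (i : ℕ) : ((Fin i → S) →₀ R) →ₗ[R] ((Fin (i + 1) → S) →₀ R) :=
  Finsupp.lmapDomain R R (fun t => Fin.cons s t)

variable {R S}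

lemma tupleD_single {i : ℕ} (t : Fin (i + 1) → S) (c : R) :
    tupleD R S i (single t c) =
      c • ∑ j : Fin (i + 1), ((-1 : R) ^ ((j : ℕ) + 1)) • single (t ∘ j.succAbove) 1 := by
  rw [tupleD, lift_apply, sum_single_index (by simp)]

lemma consMap_single (s : S) {i : ℕ} (t : Fin i → S) (c : R) :
    consMap R S s i (single t c) = single (Fin.cons s t) c :=
  mapDomain_single

lemma tupleD_comp_consMap_zero (s : S) :
    tupleD R S 0 ∘ₗ consMap R S s 0 = -LinearMap.id := by
  ext t
  simp [consMap_single, tupleD_single, Subsingleton.elim _ t]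

lemma tupleD_comp_consMap_succ (s : S) (i : ℕ) :
    tupleD R S (i + 1) ∘ₗ consMap R S s (i + 1) =
      -LinearMap.id - consMap R S s i ∘ₗ tupleD R S i := by
  have hcons (t : Fin (i + 1) → S) (j : Fin (i + 1)) :
      (Fin.cons s t : Fin (i + 2) → S) ∘ j.succ.succAbove = Fin.cons s (t ∘ j.succAbove) :=
    Fin.cons_comp_succ_succAbove s t j
  refine lhom_ext fun t c => ?_
  simp only [LinearMap.comp_apply, LinearMap.sub_apply, LinearMap.neg_apply, LinearMap.id_apply,
    consMap_single, tupleD_single, map_smul, map_sum, Fin.sum_univ_succ (n := i + 1), hcons,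
    Fin.succAbove_zero, Fin.cons_comp_succ, Fin.val_zero, Fin.val_succ, pow_succ, pow_zero,
    mul_neg, mul_one, neg_neg, neg_smul, one_smul, Finset.sum_neg_distrib, map_neg]
  rw [← smul_single_one t c]
  module

lemma single_eq_consMap {i : ℕ} (t : Fin (i + 1) → S) (c : R) :
    single t c = consMap R S (t 0) i (single (Fin.tail t) c) := by
  rw [consMap_single, Fin.cons_self_tail]

/-- On a basis tuple `s :: t'`, the homotopy identity `tupleD_comp_consMap_succ` for `consMap s`
reduces `d ∘ d` to `d ∘ d` one degree lower. -/
theorem tupleD_comp_tupleD (i : ℕ) : tupleD R S i ∘ₗ tupleD R S (i + 1) = 0 := by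
  induction i with
  | zero =>
    ext t
    simp [tupleD_single, Fin.sum_univ_two, Subsingleton.elim _ (default : Fin 0 → S)]
  | succ i ih =>
    refine lhom_ext fun t c => ?_
    have hd (n : ℕ) (x) : tupleD R S (n + 1) (consMap R S (t 0) (n + 1) x) =
        -x - consMap R S (t 0) n (tupleD R S n x) :=
      LinearMap.congr_fun (tupleD_comp_consMap_succ (t 0) n) x
    rw [LinearMap.comp_apply, single_eq_consMap, hd, map_sub, map_neg, hd,
      ← LinearMap.comp_apply (tupleD R S i), ih]
    simp

lemma exists_tupleD_eq_of_tupleD_eq_zero {i : ℕ} {x : (Fin (i + 1) → S) →₀ R}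
    (hx : tupleD R S i x = 0) : ∃ y, tupleD R S (i + 1) y = x := by
  cases isEmpty_or_nonempty S with
  | inl _ => exact ⟨0, Subsingleton.elim _ _⟩
  | inr hS =>
    obtain ⟨s⟩ := hS
    refine ⟨-consMap R S s (i + 1) x, ?_⟩
    rw [map_neg, ← LinearMap.comp_apply, tupleD_comp_consMap_succ]
    simp [hx]

lemma tupleD_zero_surjective [Nonempty S] : Function.Surjective (tupleD R S 0) := by
  obtain ⟨s⟩ := ‹Nonempty S›
  refine fun x => ⟨-consMap R S s 0 x, ?_⟩
  rw [map_neg, ← LinearMap.comp_apply, tupleD_comp_consMap_zero]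
  simp

end TupleComplex

end Finsupp

namespace GammaMinus

def _root_.SurjTo.precomp {X Y : GammaMinus} {A : Type} (s : SurjTo X A) (g : Y ⟶ X) : SurjTo Y A :=
  ⟨s.1 ∘ g.1, s.2.comp g.2⟩

lemma Pfun_map_single {i : ℕ} {X Y : GammaMinusᵒᵖ} (g : X ⟶ Y) (t : Fin i → SurjTo X.unop Bool)
    (c : k) : (Pfun k i).map g (Finsupp.single t c) =
      Finsupp.single (fun j => (t j).precomp g.unop) c :=
  Finsupp.mapDomain_single

lemma nonempty_surjTo_bool_iff (X : GammaMinus) :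
    Nonempty (SurjTo X Bool) ↔ ¬ Subsingleton X.carrier := by
  constructor
  · rintro ⟨s, hs⟩ hX
    obtain ⟨a, ha⟩ := hs true
    obtain ⟨b, hb⟩ := hs false
    exact Bool.false_ne_true (hb ▸ ha ▸ congrArg s (Subsingleton.elim b a))
  · intro hX
    obtain ⟨a, b, hab⟩ := not_subsingleton_iff_nontrivial.mp hX
    classical
    refine ⟨fun z => decide (z = a), fun c => ?_⟩
    cases c
    · exact ⟨b, decide_eq_false (Ne.symm hab)⟩
    · exact ⟨a, decide_eq_true rfl⟩

lemma dNat_comp_dNat (i : ℕ) : dNat k (i + 1) ≫ dNat k i = 0 := by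
  ext X : 2
  exact ModuleCat.hom_ext (Finsupp.tupleD_comp_tupleD (R := k) (S := SurjTo X.unop Bool) i)

open scoped Classical in
def augApp (X : GammaMinus) : ((Fin 0 → SurjTo X Bool) →₀ k) →ₗ[k] t1Sub k X :=
  LinearMap.codRestrict _ (if Subsingleton X.carrier then Finsupp.lapply default else 0)
    fun _ h => by rw [if_neg h, LinearMap.zero_apply]

open scoped Classical in
lemma augApp_apply (X : GammaMinus) (x : (Fin 0 → SurjTo X Bool) →₀ k) :
    (augApp k X x : k) = if Subsingleton X.carrier then x default else 0 := by
  unfold augApp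
  split_ifs <;> rfl

open scoped Classical in
lemma augApp_single (X : GammaMinus) (t : Fin 0 → SurjTo X Bool) (c : k) :
    (augApp k X (Finsupp.single t c) : k) = if Subsingleton X.carrier then c else 0 := by
  rw [augApp_apply, Subsingleton.elim t default, Finsupp.single_eq_same]

open scoped Classical in
lemma t1Map_apply (A B : GammaMinus) (c : t1Sub k A) :
    (t1Map k A B c : k) = if Subsingleton B.carrier then (c : k) else 0 :=
  rfl

def aug : Pfun k 0 ⟶ t1 k where
  app X := ModuleCat.ofHom (augApp k X.unop)
  naturality X Y g := by
    refine ModuleCat.hom_ext (Finsupp.lhom_ext fun t c => Subtype.ext ?_)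
    have hX : Subsingleton Y.unop.carrier → Subsingleton X.unop.carrier :=
      fun _ => g.unop.2.subsingleton
    show (augApp k Y.unop ((Pfun k 0).map g (Finsupp.single t c)) : k) =
      (t1Map k X.unop Y.unop (augApp k X.unop (Finsupp.single t c)) : k)
    rw [Pfun_map_single, t1Map_apply, augApp_single, augApp_single]
    split_ifs <;> simp_all

lemma augApp_surjective (X : GammaMinus) : Function.Surjective (augApp k X) := by
  rintro ⟨c, hc⟩
  by_cases hX : Subsingleton X.carrier
  · exact ⟨Finsupp.single default c, Subtype.ext (by rw [augApp_single, if_pos hX])⟩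
  · exact ⟨0, (map_zero _).trans (Subtype.ext (hc hX).symm)⟩

lemma exists_dAux_eq_of_augApp_eq_zero {X : GammaMinus} {x : (Fin 0 → SurjTo X Bool) →₀ k}
    (hx : augApp k X x = 0) : ∃ y, dAux k 0 X y = x := by
  by_cases hX : Subsingleton X.carrier
  · refine ⟨0, ?_⟩
    have h0 : x default = 0 := by simpa [augApp_apply, if_pos hX] using congrArg Subtype.val hx
    refine Finsupp.ext fun t => ?_
    rw [map_zero, Subsingleton.elim t default, h0, Finsupp.zero_apply]
  · have := (nonempty_surjTo_bool_iff X).mpr hX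
    exact Finsupp.tupleD_zero_surjective x

theorem _root_.CategoryTheory.ShortComplex.exact_of_exact_evaluation {J C : Type*} [Category J]
    [Category C] [Abelian C] (S : ShortComplex (J ⥤ C))
    (h : ∀ j, (S.map ((evaluation J C).obj j)).Exact) : S.Exact := by
  rw [S.exact_iff_isZero_homology, Functor.isZero_iff]
  exact fun j => ((S.map _).exact_iff_isZero_homology.mp (h j)).of_iso
    (S.mapHomologyIso ((evaluation J C).obj j)).symm

lemma exact_dNat (i : ℕ) :
    (ShortComplex.mk (dNat k (i + 1)) (dNat k i) (dNat_comp_dNat k i)).Exact :=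
  ShortComplex.exact_of_exact_evaluation _ fun _ =>
    (ShortComplex.moduleCat_exact_iff _).mpr fun _ => Finsupp.exists_tupleD_eq_of_tupleD_eq_zero

lemma dNat_comp_aug : dNat k 0 ≫ aug k = 0 := by
  ext X : 2
  refine ModuleCat.hom_ext (Finsupp.lhom_ext fun t c => Subtype.ext ?_)
  show (augApp k X.unop (dAux k 0 X.unop (Finsupp.single t c)) : k) = 0
  rw [augApp_apply, if_neg ((nonempty_surjTo_bool_iff _).mp ⟨t 0⟩)]

lemma exact_dNat_aug : (ShortComplex.mk (dNat k 0) (aug k) (dNat_comp_aug k)).Exact :=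
  ShortComplex.exact_of_exact_evaluation _ fun _ =>
    (ShortComplex.moduleCat_exact_iff _).mpr fun _ => exists_dAux_eq_of_augApp_eq_zero k

instance : Epi (aug k) :=
  (NatTrans.epi_iff_epi_app _).mpr fun X =>
    (ModuleCat.epi_iff_surjective _).mpr (augApp_surjective k X.unop)

def cokernelDNatIso : cokernel (dNat k 0) ≅ t1 k :=
  IsColimit.coconePointUniqueUpToIso (cokernelIsCokernel _) (exact_dNat_aug k).gIsCokernel

section Projective

variable {i : ℕ}

def CoordSurjective (R : Set (Fin i → Bool)) : Prop :=
  ∀ (j : Fin i) (b : Bool), ∃ v ∈ R, v j = b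

def ofSet (R : Set (Fin i → Bool)) (hR : R.Nonempty) : GammaMinus :=
  @GammaMinus.mk R hR.to_subtype _

def coordTuple (R : Set (Fin i → Bool)) (hR : R.Nonempty) (hc : CoordSurjective R) :
    Fin i → SurjTo (ofSet R hR) Bool :=
  fun j => ⟨fun v => (v : R).1 j, fun b => by
    obtain ⟨v, hv, hvb⟩ := hc j b
    exact ⟨⟨v, hv⟩, hvb⟩⟩

def tupleRange {X : GammaMinus} (t : Fin i → SurjTo X Bool) : Set (Fin i → Bool) :=
  Set.range fun a j => (t j).1 a

lemma tupleRange_nonempty {X : GammaMinus} (t : Fin i → SurjTo X Bool) :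
    (tupleRange t).Nonempty :=
  Set.range_nonempty _

lemma coordSurjective_tupleRange {X : GammaMinus} (t : Fin i → SurjTo X Bool) :
    CoordSurjective (tupleRange t) := fun j b =>
  have ⟨a, ha⟩ := (t j).2 b
  ⟨_, ⟨a, rfl⟩, ha⟩

def toTupleRange {X : GammaMinus} (t : Fin i → SurjTo X Bool) :
    X ⟶ ofSet (tupleRange t) (tupleRange_nonempty t) :=
  ⟨fun a => ⟨fun j => (t j).1 a, a, rfl⟩, by rintro ⟨_, a, rfl⟩; exact ⟨a, rfl⟩⟩

lemma Pfun_map_toTupleRange_single {X : GammaMinus} (t : Fin i → SurjTo X Bool) (c : k) :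
    (Pfun k i).map (toTupleRange t).op (Finsupp.single
      (coordTuple _ (tupleRange_nonempty t) (coordSurjective_tupleRange t)) c) =
      Finsupp.single t c :=
  Pfun_map_single k _ _ c

lemma tupleRange_comp {X Y : GammaMinus} (g : Y ⟶ X) (t : Fin i → SurjTo X Bool) :
    tupleRange (fun j => (t j).precomp g) = tupleRange t :=
  g.2.range_comp fun a j => (t j).1 a

variable {F G : GammaMinusᵒᵖ ⥤ ModuleCat.{0} k} (e : F ⟶ G) [Epi e] (f : Pfun k i ⟶ G)

def liftElem (R : Set (Fin i → Bool)) (hR : R.Nonempty) (hc : CoordSurjective R) :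
    F.obj (Opposite.op (ofSet R hR)) :=
  ((ModuleCat.epi_iff_surjective (e.app (Opposite.op (ofSet R hR)))).mp inferInstance
    (f.app (Opposite.op (ofSet R hR)) (Finsupp.single (coordTuple R hR hc) 1))).choose

lemma app_liftElem (R : Set (Fin i → Bool)) (hR : R.Nonempty) (hc : CoordSurjective R) :
    e.app (Opposite.op (ofSet R hR)) (liftElem k e f R hR hc) =
      f.app (Opposite.op (ofSet R hR)) (Finsupp.single (coordTuple R hR hc) 1) :=
  ((ModuleCat.epi_iff_surjective (e.app (Opposite.op (ofSet R hR)))).mp inferInstance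
    (f.app (Opposite.op (ofSet R hR)) (Finsupp.single (coordTuple R hR hc) 1))).choose_spec

-- `ofSet R` depends on the set `R` itself, so equal ranges have to be identified by transport.
lemma map_liftElem_congr {R R' : Set (Fin i → Bool)} (h : R = R') (hR : R.Nonempty)
    (hR' : R'.Nonempty) (hc : CoordSurjective R) (hc' : CoordSurjective R') {X : GammaMinus}
    (q : X ⟶ ofSet R hR) (q' : X ⟶ ofSet R' hR') (hq : ∀ a, (q.1 a : R).1 = (q'.1 a : R').1) :
    F.map q.op (liftElem k e f R hR hc) = F.map q'.op (liftElem k e f R' hR' hc') := by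
  subst h
  obtain rfl : q = q' := Subtype.ext (funext fun a => Subtype.ext (hq a))
  rfl

def liftAt {X : GammaMinusᵒᵖ} (t : Fin i → SurjTo X.unop Bool) : F.obj X :=
  F.map (toTupleRange t).op
    (liftElem k e f _ (tupleRange_nonempty t) (coordSurjective_tupleRange t))

lemma liftAt_map {X Y : GammaMinusᵒᵖ} (g : X ⟶ Y) (t : Fin i → SurjTo X.unop Bool) :
    liftAt k e f (fun j => (t j).precomp g.unop) = F.map g (liftAt k e f t) := by
  simp only [liftAt]
  rw [← ConcreteCategory.comp_apply, ← F.map_comp]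
  exact map_liftElem_congr k e f (tupleRange_comp g.unop t) _ _ _ _ _ (g.unop ≫ toTupleRange t)
    fun _ => rfl

lemma app_liftAt {X : GammaMinusᵒᵖ} (t : Fin i → SurjTo X.unop Bool) :
    e.app X (liftAt k e f t) = f.app X (Finsupp.single t 1) := by
  rw [liftAt, NatTrans.naturality_apply, app_liftElem]
  erw [← NatTrans.naturality_apply, Pfun_map_toTupleRange_single]

def liftPfun : Pfun k i ⟶ F where
  app X := ModuleCat.ofHom (Finsupp.linearCombination k (liftAt k e f))
  naturality X Y g := by
    refine ModuleCat.hom_ext (Finsupp.lhom_ext fun t c => ?_)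
    show Finsupp.linearCombination k (liftAt k e f) ((Pfun k i).map g (Finsupp.single t c)) =
      F.map g (Finsupp.linearCombination k (liftAt k e f) (Finsupp.single t c))
    rw [Pfun_map_single, Finsupp.linearCombination_single, Finsupp.linearCombination_single,
      map_smul, liftAt_map]

lemma liftPfun_comp : liftPfun k e f ≫ e = f := by
  ext X : 2
  refine ModuleCat.hom_ext (Finsupp.lhom_ext fun t c => ?_)
  show e.app X (Finsupp.linearCombination k (liftAt k e f) (Finsupp.single t c)) =
    f.app X (Finsupp.single t c)
  rw [Finsupp.linearCombination_single, map_smul, app_liftAt]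
  erw [← map_smul, Finsupp.smul_single_one]

end Projective

instance projective_Pfun (i : ℕ) : Projective (Pfun k i) :=
  ⟨fun f e _ => ⟨liftPfun k e f, liftPfun_comp k e f⟩⟩

end GammaMinus

/-- In `A = Fun(Γ₋ᵒᵖ, Vect_k)`, the complex `(P_•, d)` with
`P_i = s₂^{⊗i}` and the alternating-sum differential is a projective resolution of `t₁`:
`d ∘ d = 0`, each `P_i` is projective, the cokernel of `d₁ : P₁ → P₀` is isomorphic to
`t₁`, and the complex is exact in positive degrees. -/
theorem stmt_9 (k : Type) [Field k] :
    ∃ hzero : ∀ i : ℕ, dNat k (i + 1) ≫ dNat k i = 0,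
      (∀ i : ℕ, Projective (Pfun k i)) ∧
      Nonempty (cokernel (dNat k 0) ≅ t1 k) ∧
      (∀ i : ℕ, (ShortComplex.mk (dNat k (i + 1)) (dNat k i) (hzero i)).Exact) :=
  ⟨GammaMinus.dNat_comp_dNat k, GammaMinus.projective_Pfun k, ⟨GammaMinus.cokernelDNatIso k⟩,
    GammaMinus.exact_dNat k⟩

end
end
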